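/- arXiv:1310.2025 — 7 statements merged into one kernel-verified Lean document; each statement's English description precedes it below -/
import Mathlib

section
/- Let v > 0, a > 0, C > 0 with v < 3a²/(8C), and set ε = (8C/(3a²))·v, so ε ∈ (0,1). Define h⁺(t) = v·t − (1/2)·a·t² + (C/6)·t³ and τ̃ = 2v/a. Then h⁺(τ̃·(1+ε)) < 0. -/
/-!
With `τ = 2v/a`, the cubic `v t - a t²/2 + C t³/6` at `t = τ s` factors as
`(2v²/a) s (1 - s + (ε/4) s²)` where `ε = 8Cv/(3a²)`. At `s = 1 + ε` the last factor is
`ε ((1 + ε)²/4 - 1)`, which is negative as soon as `0 < ε < 1`.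
-/

lemma cubic_at_mul_hop_time (v a C s : ℝ) (ha : a ≠ 0) :
    v * (2 * v / a * s) - 1 / 2 * a * (2 * v / a * s) ^ 2 + C / 6 * (2 * v / a * s) ^ 3
      = 2 * v ^ 2 / a * s * (1 - s + (8 * C / (3 * a ^ 2) * v) / 4 * s ^ 2) := by
  field_simp
  ring

lemma one_sub_add_div_four_mul_sq_neg {ε : ℝ} (hε0 : 0 < ε) (hε1 : ε < 1) :
    1 - (1 + ε) + ε / 4 * (1 + ε) ^ 2 < 0 := by
  have hfactor : 1 - (1 + ε) + ε / 4 * (1 + ε) ^ 2 = ε * ((1 + ε) ^ 2 / 4 - 1) := by ring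
  rw [hfactor]
  exact mul_neg_of_pos_of_neg hε0 (by nlinarith)

theorem hplus_neg (v a C : ℝ) (hv : 0 < v) (ha : 0 < a) (hC : 0 < C)
    (hsmall : v < 3*a^2/(8*C)) :
    (fun t : ℝ => v*t - (1/2)*a*t^2 + (C/6)*t^3) ((2*v/a) * (1 + (8*C/(3*a^2))*v)) < 0 := by
  set ε : ℝ := 8 * C / (3 * a ^ 2) * v with hε
  have hε0 : 0 < ε := by positivity
  have hε1 : ε < 1 := by
    rw [hε, div_mul_eq_mul_div, div_lt_one (by positivity)]
    rwa [lt_div_iff₀ (by positivity), mul_comm] at hsmall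
  show v * (2 * v / a * (1 + ε)) - 1 / 2 * a * (2 * v / a * (1 + ε)) ^ 2
    + C / 6 * (2 * v / a * (1 + ε)) ^ 3 < 0
  rw [cubic_at_mul_hop_time v a C (1 + ε) ha.ne']
  exact mul_neg_of_pos_of_neg (by positivity) (one_sub_add_div_four_mul_sq_neg hε0 hε1)
end

section
/- Let v > 0, a > 0, C > 0 with v < 3a²/(8C), and set ε = (8C/(3a²))·v. Define h⁻(t) = v·t − (1/2)·a·t² − (C/6)·t³ and τ̃ = 2v/a. Then h⁻(τ̃·(1−ε)) > 0. -/
/-!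
With `τ̃ = 2v/a` the quadratic part `v t - a t²/2` equals `(a/2) t (τ̃ - t)`, and the choice of `ε`
makes `C = 3a²ε/(8v)`. Substituting `t = τ̃(1-ε)` gives the closed form
`h⁻(τ̃(1-ε)) = (v²ε/(2a)) (1-ε) (4 - (1-ε)²)`, which is positive as soon as `0 < ε < 1`;
the smallness assumption on `v` is exactly `ε < 1`.
-/

lemma hopCubic_eval_shrunk_hopTime {v a C : ℝ} (hv : v ≠ 0) (ha : a ≠ 0) :
    let ε := 8 * C / (3 * a ^ 2) * v
    let t := 2 * v / a * (1 - ε)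
    v * t - 1 / 2 * a * t ^ 2 - C / 6 * t ^ 3 = v ^ 2 * ε / (2 * a) * (1 - ε) * (4 - (1 - ε) ^ 2) := by
  intro ε t
  simp only [ε, t]
  field_simp
  ring

lemma hopRatio_mem_Ioo {v a C : ℝ} (hv : 0 < v) (ha : 0 < a) (hC : 0 < C)
    (hsmall : v < 3 * a ^ 2 / (8 * C)) :
    8 * C / (3 * a ^ 2) * v ∈ Set.Ioo 0 1 := by
  refine ⟨by positivity, ?_⟩
  rw [div_mul_eq_mul_div, div_lt_one (by positivity)]
  rw [lt_div_iff₀ (by positivity)] at hsmall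
  linarith

lemma shrinkFactor_pos {ε : ℝ} (hε : ε ∈ Set.Ioo 0 1) : 0 < (1 - ε) * (4 - (1 - ε) ^ 2) := by
  obtain ⟨hε0, hε1⟩ := hε
  have h_sub : 0 < 1 - ε := by linarith
  exact mul_pos h_sub (by nlinarith)

theorem hminus_pos (v a C : ℝ) (hv : 0 < v) (ha : 0 < a) (hC : 0 < C)
    (hsmall : v < 3*a^2/(8*C)) :
    0 < (fun t : ℝ => v*t - (1/2)*a*t^2 - (C/6)*t^3) ((2*v/a) * (1 - (8*C/(3*a^2))*v)) := by
  have hε := hopRatio_mem_Ioo hv ha hC hsmall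
  show 0 < v * _ - 1 / 2 * a * _ ^ 2 - C / 6 * _ ^ 3
  rw [hopCubic_eval_shrunk_hopTime hv.ne' ha.ne', mul_assoc]
  exact mul_pos (div_pos (mul_pos (by positivity) hε.1) (by positivity)) (shrinkFactor_pos hε)
end

section
/- Let v > 0, a > 0, C > 0. Suppose γ : [0, τ] → ℝ is C² with γ(0) = 0, γ'(0) = v, and |γ''(t) + a| ≤ C·t for all t ∈ [0, τ], where τ > 0 is the first positive zero of γ (i.e., γ(τ) = 0 and γ > 0 on (0, τ)). If v < 3a²/(8C), then |τ/(2v/a) − 1| < (8C/(3a²))·v. -/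
/-!
On `[0, τ]` the acceleration bound `-a - C t ≤ γ'' t ≤ -a + C t` integrates twice to
`h⁻ ≤ γ ≤ h⁺`, where `h^± t = v t - a t² / 2 ± C t³ / 6`. In the rescaled time
`s = t / (2v/a)` one has `h^± = t v (1 - s ± ε s² / 4)` with `ε = 8 C v / (3 a²)`.
Hence `h⁺ < 0` at `s = 1 + ε`, which forces the first zero `τ` of `γ` before that time, and
`h⁻ > 0` for `0 < s ≤ 1 - ε`, which forces `τ` after it.
-/

open Set

theorem le_of_hasDerivAt_le {f g f' g' : ℝ → ℝ} {a b : ℝ}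
    (hf : ∀ x ∈ Icc a b, HasDerivAt f (f' x) x) (hg : ∀ x ∈ Icc a b, HasDerivAt g (g' x) x)
    (ha : f a ≤ g a) (h' : ∀ x ∈ Icc a b, f' x ≤ g' x) :
    ∀ x ∈ Icc a b, f x ≤ g x := fun _ hx =>
  image_le_of_deriv_right_le_deriv_boundary
    (fun x hx => (hf x hx).continuousAt.continuousWithinAt)
    (fun x hx => (hf x (Ico_subset_Icc_self hx)).hasDerivWithinAt) ha
    (fun x hx => (hg x hx).continuousAt.continuousWithinAt)
    (fun x hx => (hg x (Ico_subset_Icc_self hx)).hasDerivWithinAt)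
    (fun x hx => h' x (Ico_subset_Icc_self hx)) hx

theorem le_of_hasDerivAt_hasDerivAt_le {f g f' g' f'' g'' : ℝ → ℝ} {a b : ℝ}
    (hf : ∀ x ∈ Icc a b, HasDerivAt f (f' x) x) (hg : ∀ x ∈ Icc a b, HasDerivAt g (g' x) x)
    (hf' : ∀ x ∈ Icc a b, HasDerivAt f' (f'' x) x)
    (hg' : ∀ x ∈ Icc a b, HasDerivAt g' (g'' x) x)
    (ha : f a ≤ g a) (ha' : f' a ≤ g' a) (h'' : ∀ x ∈ Icc a b, f'' x ≤ g'' x) :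
    ∀ x ∈ Icc a b, f x ≤ g x :=
  le_of_hasDerivAt_le hf hg ha (le_of_hasDerivAt_le hf' hg' ha' h'')

/-- The comparison cubic `h^±` of the paper is `cubicProfile v a (±C)`. -/
noncomputable def cubicProfile (v a c t : ℝ) : ℝ := v * t - a * t ^ 2 / 2 + c * t ^ 3 / 6

theorem hasDerivAt_cubicProfile (v a c t : ℝ) :
    HasDerivAt (cubicProfile v a c) (v - a * t + c * t ^ 2 / 2) t := by
  have := (((hasDerivAt_id t).const_mul v).sub
    (((hasDerivAt_pow 2 t).const_mul a).div_const 2)).add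
    (((hasDerivAt_pow 3 t).const_mul c).div_const 6)
  exact this.congr_deriv (by ring)

theorem hasDerivAt_deriv_cubicProfile (v a c t : ℝ) :
    HasDerivAt (fun t => v - a * t + c * t ^ 2 / 2) (-a + c * t) t := by
  have := ((hasDerivAt_const t v).sub ((hasDerivAt_id t).const_mul a)).add
    (((hasDerivAt_pow 2 t).const_mul c).div_const 2)
  exact this.congr_deriv (by ring)

section Trapping

variable {v a c τ : ℝ} {γ γ' γ'' : ℝ → ℝ}
  (hd1 : ∀ t ∈ Icc 0 τ, HasDerivAt γ (γ' t) t) (hd2 : ∀ t ∈ Icc 0 τ, HasDerivAt γ' (γ'' t) t)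
  (h0 : γ 0 = 0) (hv0 : γ' 0 = v)
include hd1 hd2 h0 hv0

theorem le_cubicProfile (hacc : ∀ t ∈ Icc 0 τ, γ'' t ≤ -a + c * t) :
    ∀ t ∈ Icc 0 τ, γ t ≤ cubicProfile v a c t :=
  le_of_hasDerivAt_hasDerivAt_le hd1 (fun t _ => hasDerivAt_cubicProfile v a c t) hd2
    (fun t _ => hasDerivAt_deriv_cubicProfile v a c t) (by simp [h0, cubicProfile])
    (by simp [hv0]) hacc

theorem cubicProfile_le (hacc : ∀ t ∈ Icc 0 τ, -a + c * t ≤ γ'' t) :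
    ∀ t ∈ Icc 0 τ, cubicProfile v a c t ≤ γ t :=
  le_of_hasDerivAt_hasDerivAt_le (fun t _ => hasDerivAt_cubicProfile v a c t) hd1
    (fun t _ => hasDerivAt_deriv_cubicProfile v a c t) hd2 (by simp [h0, cubicProfile])
    (by simp [hv0]) hacc

end Trapping

theorem cubicProfile_rescale (v c s : ℝ) {a : ℝ} (ha : a ≠ 0) :
    cubicProfile v a c (2 * v / a * s) =
      2 * v / a * s * (v * (1 - s + 8 * c / (3 * a ^ 2) * v * s ^ 2 / 4)) := by
  unfold cubicProfile
  field_simp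
  ring

section RescaledRoots

variable {v a C : ℝ} (hv : 0 < v) (ha : 0 < a) (hC : 0 < C)
include hv ha hC

theorem cubicProfile_one_add_neg (hε : 8 * C / (3 * a ^ 2) * v < 1) :
    cubicProfile v a C (2 * v / a * (1 + 8 * C / (3 * a ^ 2) * v)) < 0 := by
  set ε := 8 * C / (3 * a ^ 2) * v
  have hε0 : 0 < ε := by positivity
  rw [cubicProfile_rescale v C _ ha.ne']
  have : 1 - (1 + ε) + ε * (1 + ε) ^ 2 / 4 < 0 := by
    nlinarith [mul_pos hε0 (mul_pos (sub_pos.2 hε) (by positivity : (0 : ℝ) < ε + 3))]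
  exact mul_neg_of_pos_of_neg (by positivity) (mul_neg_of_pos_of_neg hv this)

theorem cubicProfile_neg_pos {s : ℝ} (hs0 : 0 < s)
    (hs : s ≤ 1 - 8 * C / (3 * a ^ 2) * v) :
    0 < cubicProfile v a (-C) (2 * v / a * s) := by
  set ε := 8 * C / (3 * a ^ 2) * v
  have hε0 : 0 < ε := by positivity
  rw [cubicProfile_rescale v (-C) s ha.ne', show 8 * -C / (3 * a ^ 2) * v = -ε by ring]
  have hs1 : s ^ 2 ≤ 1 := by nlinarith
  have : 0 < 1 - s + -ε * s ^ 2 / 4 := by nlinarith [mul_le_mul_of_nonneg_left hs1 hε0.le]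
  positivity

end RescaledRoots

theorem hop_time_general (v a C τ : ℝ) (γ γ' γ'' : ℝ → ℝ)
    (hv : 0 < v) (ha : 0 < a) (hC : 0 < C) (hτ : 0 < τ)
    (hd1 : ∀ t ∈ Set.Icc 0 τ, HasDerivAt γ (γ' t) t)
    (hd2 : ∀ t ∈ Set.Icc 0 τ, HasDerivAt γ' (γ'' t) t)
    (h0 : γ 0 = 0) (hv0 : γ' 0 = v)
    (hacc : ∀ t ∈ Set.Icc 0 τ, |γ'' t + a| ≤ C * t)
    (hτ0 : γ τ = 0) (hpos : ∀ t ∈ Set.Ioo 0 τ, 0 < γ t)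
    (hsmall : v < 3*a^2/(8*C)) :
    |τ / (2*v/a) - 1| < (8*C/(3*a^2))*v := by
  have hT : 0 < 2 * v / a := by positivity
  have hε : 8 * C / (3 * a ^ 2) * v < 1 := by
    rw [lt_div_iff₀ (by positivity)] at hsmall
    rw [div_mul_eq_mul_div, div_lt_one (by positivity)]
    linarith
  have hγ_le := le_cubicProfile hd1 hd2 h0 hv0 (a := a) (c := C)
    fun t ht => by linarith [(abs_le.1 (hacc t ht)).2]
  have hγ_ge := cubicProfile_le hd1 hd2 h0 hv0 (a := a) (c := -C)
    fun t ht => by linarith [(abs_le.1 (hacc t ht)).1]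
  set s := τ / (2 * v / a)
  have hτs : τ = 2 * v / a * s := (mul_div_cancel₀ τ hT.ne').symm
  have hupper : s < 1 + 8 * C / (3 * a ^ 2) * v := by
    by_contra! hs
    set T := 2 * v / a * (1 + 8 * C / (3 * a ^ 2) * v)
    have hTτ : T ∈ Ioc 0 τ := ⟨by positivity, hτs ▸ mul_le_mul_of_nonneg_left hs hT.le⟩
    have hγT : 0 ≤ γ T :=
      hTτ.2.eq_or_lt.elim (fun h => h ▸ hτ0.ge) fun h => (hpos T ⟨hTτ.1, h⟩).le
    linarith [hγ_le T (Ioc_subset_Icc_self hTτ), cubicProfile_one_add_neg hv ha hC hε]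
  have hlower : 1 - 8 * C / (3 * a ^ 2) * v < s := by
    by_contra! hs
    have hγτ := hγ_ge τ ⟨hτ.le, le_rfl⟩
    rw [hτs] at hγτ hτ0
    linarith [cubicProfile_neg_pos hv ha hC (by positivity) hs]
  exact abs_sub_lt_iff.2 ⟨by linarith, by linarith⟩

theorem hop_time (v a C τ : ℝ) (γ γ' γ'' : ℝ → ℝ)
    (hv : 0 < v) (ha : 0 < a) (hC : 0 < C) (hτ : 0 < τ)
    (hd1 : ∀ t ∈ Set.Icc 0 τ, HasDerivAt γ (γ' t) t)
    (hd2 : ∀ t ∈ Set.Icc 0 τ, HasDerivAt γ' (γ'' t) t)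
    (hc : ContinuousOn γ'' (Set.Icc 0 τ))
    (h0 : γ 0 = 0) (hv0 : γ' 0 = v)
    (hacc : ∀ t ∈ Set.Icc 0 τ, |γ'' t + a| ≤ C * t)
    (hτ0 : γ τ = 0) (hpos : ∀ t ∈ Set.Ioo 0 τ, 0 < γ t)
    (hsmall : v < 3*a^2/(8*C)) :
    |τ / (2*v/a) - 1| < (8*C/(3*a^2))*v :=
  hop_time_general v a C τ γ γ' γ'' hv ha hC hτ hd1 hd2 h0 hv0 hacc hτ0 hpos hsmall
end

section
/- Let f : [0, ∞) → ℝ be continuous with compact support contained in [0, L]. If ∫₀^L e^{−λ·s}·f(s) ds = 0 for all λ > λ₀ (for some fixed λ₀ ∈ ℝ), then f = 0. -/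
/-!
Fix `r > max λ₀ 0` and put `φ(s) = e^{-r s}`. Every moment `∫₀^L φ(s)^n · φ(s) f(s) ds`
vanishes, being the Laplace transform of `f` at `(n + 1) r > λ₀`. As `φ` is injective on
`[0, L]`, its powers span a dense subspace of `C([0, L], ℝ)` (Stone–Weierstrass), so `φ f` is
`L²`-orthogonal to every continuous function, in particular to itself. Hence `φ f = 0`, and
`f = 0` because `φ > 0`.
-/

open MeasureTheory Set Function

theorem MeasureTheory.Measure.isOpenPosMeasure_comap_subtype_val {Z : Type*}
    [TopologicalSpace Z] [MeasurableSpace Z] (μ : Measure Z) [μ.IsOpenPosMeasure] {s : Set Z}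
    (hs : MeasurableSet s) (hsc : s ⊆ closure (interior s)) :
    (μ.comap ((↑) : s → Z)).IsOpenPosMeasure where
  open_pos U hU := by
    rintro ⟨x, hxU⟩
    obtain ⟨V, hV, rfl⟩ := isOpen_induced_iff.mp hU
    have hne : (V ∩ interior s).Nonempty := mem_closure_iff.mp (hsc x.2) V hV hxU
    rw [(MeasurableEmbedding.subtype_coe hs).comap_apply, Subtype.image_preimage_coe]
    have hsub : V ∩ interior s ⊆ s ∩ V := fun _ hy => ⟨interior_subset hy.2, hy.1⟩
    exact fun h0 => (hV.inter isOpen_interior).measure_ne_zero μ hne (measure_mono_null hsub h0)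

instance {a b : ℝ} : IsFiniteMeasure ((volume : Measure ℝ).comap ((↑) : Icc a b → ℝ)) :=
  have : IsFiniteMeasureOnCompacts ((volume : Measure ℝ).comap ((↑) : Icc a b → ℝ)) :=
    .comap' _ continuous_subtype_val (MeasurableEmbedding.subtype_coe measurableSet_Icc)
  inferInstance

theorem isOpenPosMeasure_comap_val_Icc {a b : ℝ} (hab : a < b) :
    ((volume : Measure ℝ).comap ((↑) : Icc a b → ℝ)).IsOpenPosMeasure :=
  Measure.isOpenPosMeasure_comap_subtype_val _ measurableSet_Icc <| by
    rw [interior_Icc, closure_Ioo hab.ne]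

theorem integral_comap_val_Icc_eq_intervalIntegral {a b : ℝ} (hab : a ≤ b) (F : ℝ → ℝ) :
    ∫ x : Icc a b, F x ∂(volume : Measure ℝ).comap (↑) = ∫ s in a..b, F s := by
  rw [integral_subtype_comap measurableSet_Icc, intervalIntegral.integral_of_le hab,
    integral_Icc_eq_integral_Ioc]

namespace ContinuousMap

variable {X : Type*} [TopologicalSpace X] [CompactSpace X]

theorem dense_span_range_pow {φ : C(X, ℝ)} (hφ : Injective φ) :
    Dense (Submodule.span ℝ (range (φ ^ ·)) : Set C(X, ℝ)) := by
  have hsep : (Algebra.adjoin ℝ {φ}).SeparatesPoints := fun x y hxy =>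
    ⟨φ, ⟨φ, Algebra.subset_adjoin rfl, rfl⟩, hφ.ne hxy⟩
  have hspan :
      (Submodule.span ℝ (range (φ ^ ·)) : Set C(X, ℝ)) = Algebra.adjoin ℝ {φ} := by
    rw [← Subalgebra.coe_toSubmodule, Algebra.adjoin_eq_span, Submonoid.closure_singleton_eq]
    rfl
  rw [hspan, dense_iff_closure_eq, ← Subalgebra.topologicalClosure_coe,
    subalgebra_topologicalClosure_eq_top_of_separatesPoints _ hsep, Algebra.coe_top]

theorem eq_zero_of_forall_integral_pow_mul_eq_zero [MeasurableSpace X] [BorelSpace X]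
    (μ : Measure X) [IsFiniteMeasure μ] [μ.IsOpenPosMeasure] {φ g : C(X, ℝ)}
    (hφ : Injective φ) (hmom : ∀ n : ℕ, ∫ x, φ x ^ n * g x ∂μ = 0) : g = 0 := by
  let G := toLp 2 μ ℝ g
  let Λ : C(X, ℝ) →L[ℝ] ℝ := (innerSL ℝ G).comp (toLp 2 μ ℝ)
  have hΛ : Λ = 0 := ContinuousLinearMap.ext_on (dense_span_range_pow hφ) <| by
    rintro _ ⟨n, rfl⟩
    simpa [Λ, G, ContinuousMap.inner_toLp, mul_comm] using hmom n
  have hG : inner ℝ G G = 0 := congr($hΛ g)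
  rw [← toLp_inj μ (p := 2) (𝕜 := ℝ), map_zero]
  exact inner_self_eq_zero.mp hG

end ContinuousMap

theorem laplace_injective (L lam₀ : ℝ) (f : ℝ → ℝ) (hL : 0 < L)
    (hf : Continuous f) (hsupp : tsupport f ⊆ Set.Icc 0 L)
    (hvan : ∀ lam : ℝ, lam₀ < lam → (∫ s in (0:ℝ)..L, Real.exp (-lam * s) * f s) = 0) :
    f = 0 := by
  set r := max lam₀ 0 + 1
  have hr : 0 < r := by positivity
  let ν := (volume : Measure ℝ).comap ((↑) : Icc 0 L → ℝ)
  have := isOpenPosMeasure_comap_val_Icc hL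
  let φ : C(Icc 0 L, ℝ) := ⟨fun x => Real.exp (-r * x), by fun_prop⟩
  let g : C(Icc 0 L, ℝ) := ⟨fun x => Real.exp (-r * x) * f x, by fun_prop⟩
  have hφ : Injective φ := fun x y hxy =>
    Subtype.ext <| mul_left_cancel₀ (neg_ne_zero.mpr hr.ne') (Real.exp_injective hxy)
  have hmom (n : ℕ) : ∫ x, φ x ^ n * g x ∂ν = 0 := by
    have hlam : lam₀ < (n + 1) * r := by
      nlinarith [le_max_left lam₀ 0, le_max_right lam₀ 0, (n.cast_nonneg : (0 : ℝ) ≤ n)]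
    have hpow (s : ℝ) : Real.exp (-r * s) ^ n * (Real.exp (-r * s) * f s) =
        Real.exp (-((n + 1) * r) * s) * f s := by
      rw [← mul_assoc, ← pow_succ, ← Real.exp_nat_mul]
      push_cast
      ring_nf
    calc ∫ x, φ x ^ n * g x ∂ν
        = ∫ s in 0..L, Real.exp (-r * s) ^ n * (Real.exp (-r * s) * f s) :=
          integral_comap_val_Icc_eq_intervalIntegral hL.le
            fun s => Real.exp (-r * s) ^ n * (Real.exp (-r * s) * f s)
      _ = ∫ s in 0..L, Real.exp (-((n + 1) * r) * s) * f s := by simp only [hpow]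
      _ = 0 := hvan _ hlam
  have hg := ContinuousMap.eq_zero_of_forall_integral_pow_mul_eq_zero ν hφ hmom
  funext s
  by_cases hs : s ∈ Icc 0 L
  · simpa [g, (Real.exp_pos _).ne'] using congr($hg ⟨s, hs⟩)
  · exact image_eq_zero_of_notMem_tsupport fun h => hs (hsupp h)
end

section
/- Let f : ℂ → ℂ be integrable, compactly supported, and rotationally symmetric, i.e., f(e^{iθ}·z) = f(z) for all z ∈ ℂ and θ ∈ ℝ. Then If(λ) = ∫_ℂ e^{λz}·f(z) dH²(z) is constant in λ; in particular If(λ) = ∫_ℂ f dH² for all λ ∈ ℂ. -/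
/-!
Since `f` is rotation invariant, `∫ g z * f z` does not change when `g` is replaced by its rotation
average `z ↦ ⨍_{|u| = 1} g (u * z)`: average the rotated integrals over `θ` and swap the integrals,
which is legitimate because `f` has compact support, so the integrand is bounded by a multiple of
`‖f‖`. For `g = exp (l * ·)`, which is entire, the mean value property makes this average
identically `g 0 = 1`.
-/

open MeasureTheory Complex

lemma integral_comp_circle_mul {E : Type*} [NormedAddCommGroup E] [NormedSpace ℝ E]
    (g : ℂ → E) (a : Circle) : ∫ z, g (a * z) = ∫ z, g z := by
  simpa [rotation_apply] using
    (rotation a).measurePreserving.integral_comp (rotation a).toHomeomorph.measurableEmbedding g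

lemma circleAverage_comp_mul_eq_apply_zero {g : ℂ → ℂ} (hg : Differentiable ℂ g) (z : ℂ) :
    Real.circleAverage (fun u => g (u * z)) 0 1 = g 0 := by
  have hgz : Differentiable ℂ fun u => g (u * z) := hg.comp (differentiable_id.mul_const z)
  simpa using hgz.diffContOnCl.circleAverage (c := 0) (R := 1)

lemma integrable_prod_circleMap_mul {g : ℂ → ℂ} (hg : Continuous g) {f : ℂ → ℂ}
    (hf : Integrable f) (hsupp : HasCompactSupport f) (μ : Measure ℝ) [IsFiniteMeasure μ] :
    Integrable (fun p : ℝ × ℂ => g (circleMap 0 1 p.1 * p.2) * f p.2) (μ.prod volume) := by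
  obtain ⟨M, hM⟩ := hsupp.isCompact.isBounded.subset_closedBall 0
  obtain ⟨C, hC⟩ :=
    (isCompact_closedBall (0 : ℂ) M).exists_bound_of_continuousOn hg.continuousOn
  have hbound : ∀ p : ℝ × ℂ, ‖g (circleMap 0 1 p.1 * p.2) * f p.2‖ ≤ C * ‖f p.2‖ := by
    rintro ⟨θ, z⟩
    rw [norm_mul]
    by_cases hz : f z = 0
    · simp [hz]
    refine mul_le_mul_of_nonneg_right (hC _ ?_) (norm_nonneg _)
    simpa using hM (subset_tsupport f hz)
  have hkernel : Continuous fun p : ℝ × ℂ => g (circleMap 0 1 p.1 * p.2) := by fun_prop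
  refine Integrable.mono' ((integrable_const C).mul_prod hf.norm) ?_ (.of_forall hbound)
  exact hkernel.aestronglyMeasurable.mul
    (hf.1.comp_quasiMeasurePreserving Measure.quasiMeasurePreserving_snd)

lemma integral_mul_eq_integral_circleAverage_mul {g : ℂ → ℂ} (hg : Continuous g) {f : ℂ → ℂ}
    (hf : Integrable f) (hsupp : HasCompactSupport f)
    (hrot : ∀ (θ : ℝ) (z : ℂ), f (exp (θ * I) * z) = f z) :
    ∫ z, g z * f z = ∫ z, Real.circleAverage (fun u => g (u * z)) 0 1 * f z := by
  set μ := volume.restrict (Set.Ioc 0 (2 * Real.pi))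
  have hrotate : ∀ θ : ℝ, ∫ z, g (circleMap 0 1 θ * z) * f z = ∫ z, g z * f z := fun θ => by
    simpa [circleMap_zero, hrot] using integral_comp_circle_mul (fun z => g z * f z) (Circle.exp θ)
  have hμ : μ.real Set.univ = 2 * Real.pi := by simp [μ, Real.pi_pos.le]
  calc ∫ z, g z * f z
      = (2 * Real.pi)⁻¹ • ∫ θ, (∫ z, g (circleMap 0 1 θ * z) * f z) ∂μ := by
        rw [integral_congr_ae (.of_forall hrotate), integral_const, hμ, smul_smul,
          inv_mul_cancel₀ Real.two_pi_pos.ne', one_smul]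
    _ = (2 * Real.pi)⁻¹ • ∫ z, ∫ θ, g (circleMap 0 1 θ * z) * f z ∂μ := by
        rw [integral_integral_swap (integrable_prod_circleMap_mul hg hf hsupp μ)]
    _ = ∫ z, Real.circleAverage (fun u => g (u * z)) 0 1 * f z := by
        simp [Real.circleAverage_def, intervalIntegral.integral_of_le Real.two_pi_pos.le,
          integral_mul_const, μ, mul_assoc, integral_const_mul]

theorem I_rotation_invariant (f : ℂ → ℂ) (hf : Integrable f) (hsupp : HasCompactSupport f)
    (hrot : ∀ (θ : ℝ) (z : ℂ), f (Complex.exp (θ * Complex.I) * z) = f z) :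
    ∀ l : ℂ, (∫ z : ℂ, Complex.exp (l * z) * f z) = ∫ z : ℂ, f z := by
  intro l
  have hexp : Differentiable ℂ fun z => exp (l * z) := by fun_prop
  rw [integral_mul_eq_integral_circleAverage_mul hexp.continuous hf hsupp hrot]
  simp [circleAverage_comp_mul_eq_apply_zero hexp]
end

section
/- Let f : ℂ → ℂ be integrable and compactly supported, and rotationally symmetric about a point w ∈ ℂ (i.e., z ↦ f(w + z) is rotationally symmetric), with ∫_ℂ f dH² = 0. Then If(λ) = ∫_ℂ e^{λz}·f(z) dH²(z) = 0 for all λ ∈ ℂ. -/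
/-!
Translating by `w` multiplies `∫ e^{λz} f(z)` by `e^{λw}`, so we may take `w = 0`. For compactly
supported `g`, expanding `e^{λz}` gives `∫ e^{λz} g = ∑ λⁿ/n! ∫ zⁿ g`. The zeroth moment is
`∫ g = 0`, and for `n ≥ 1` the rotation `z ↦ e^{iπ/n} z` fixes `g` but multiplies the `n`-th
moment by `-1`, so every moment vanishes.
-/

open MeasureTheory Complex Nat Function Metric

section

variable {E : Type*} [NormedAddCommGroup E] [NormedSpace ℂ E]

theorem integral_pow_smul_eq_zero_of_comp_rotation_eq {g : ℂ → E} {c : Circle}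
    (hg : ∀ z, g (c * z) = g z) {n : ℕ} (hc : (c : ℂ) ^ n ≠ 1) :
    ∫ z, z ^ n • g z = 0 := by
  have hrot : ∫ z, ((c : ℂ) * z) ^ n • g (c * z) = ∫ z, z ^ n • g z :=
    ((rotation c).measurePreserving.integral_comp
      (rotation c).toHomeomorph.measurableEmbedding fun z ↦ z ^ n • g z :)
  simp only [hg, mul_pow, mul_smul, integral_smul] at hrot
  have : ((c : ℂ) ^ n - 1) • ∫ z, z ^ n • g z = 0 := by rw [sub_smul, hrot, one_smul, sub_self]
  exact (smul_eq_zero.1 this).resolve_left (sub_ne_zero.2 hc)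

theorem integral_pow_smul_eq_zero_of_radial {g : ℂ → E}
    (hg : ∀ (θ : ℝ) z, g (Circle.exp θ * z) = g z) {n : ℕ} (hn : n ≠ 0) :
    ∫ z, z ^ n • g z = 0 := by
  refine integral_pow_smul_eq_zero_of_comp_rotation_eq (hg (Real.pi / n)) ?_
  rw [← Circle.coe_pow, ← Circle.exp_natCast_mul, mul_div_cancel₀ _ (by exact_mod_cast hn)]
  exact Circle.coe_eq_one.not.2 Circle.exp_pi_ne_one

theorem norm_pow_div_factorial_smul_le {g : ℂ → E} {R : ℝ} (hR : support g ⊆ closedBall 0 R)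
    (l z : ℂ) (n : ℕ) : ‖((l * z) ^ n / n !) • g z‖ ≤ (‖l‖ * R) ^ n / n ! * ‖g z‖ := by
  by_cases hz : g z = 0
  · simp [hz]
  have hzR : ‖z‖ ≤ R := mem_closedBall_zero_iff.1 (hR hz)
  rw [norm_smul, norm_div, norm_pow, norm_mul, Complex.norm_natCast]
  gcongr

theorem hasSum_integral_exp_mul_smul {g : ℂ → E} (hg : Integrable g) (hgs : HasCompactSupport g)
    (l : ℂ) : HasSum (fun n : ℕ ↦ (l ^ n / n !) • ∫ z, z ^ n • g z) (∫ z, exp (l * z) • g z) := by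
  obtain ⟨R, hR⟩ := hgs.isCompact.isBounded.subset_closedBall 0
  have hbound := norm_pow_div_factorial_smul_le ((subset_tsupport g).trans hR) l
  have hint (n : ℕ) : Integrable fun z ↦ ((l * z) ^ n / n !) • g z :=
    (hg.norm.const_mul _).mono'
      ((by fun_prop : Continuous fun z : ℂ ↦ (l * z) ^ n / n !).aestronglyMeasurable.smul
        hg.aestronglyMeasurable)
      (ae_of_all _ fun z ↦ hbound z n)
  have hsum : Summable fun n : ℕ ↦ ∫ z, ‖((l * z) ^ n / n !) • g z‖ :=
    (Real.summable_pow_div_factorial (‖l‖ * R) |>.mul_right (∫ z, ‖g z‖)).of_nonneg_of_le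
      (fun n ↦ integral_nonneg fun z ↦ norm_nonneg _) fun n ↦ by
        rw [← integral_const_mul]
        exact integral_mono (hint n).norm (hg.norm.const_mul _) fun z ↦ hbound z n
  convert hasSum_integral_of_summable_integral_norm hint hsum using 1
  · ext n
    simp only [mul_pow, mul_div_right_comm, mul_smul, integral_smul]
  · congr 1 with z
    rw [exp_eq_exp_ℂ, NormedSpace.exp_eq_tsum_div, Summable.tsum_smul_const]
    exact NormedSpace.expSeries_div_summable (l * z)

theorem integral_exp_mul_smul_eq_zero_of_radial {g : ℂ → E} (hg : Integrable g)
    (hgs : HasCompactSupport g) (hrot : ∀ (θ : ℝ) z, g (Circle.exp θ * z) = g z)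
    (hzero : ∫ z, g z = 0) (l : ℂ) : ∫ z, exp (l * z) • g z = 0 := by
  refine (hasSum_integral_exp_mul_smul hg hgs l).unique ?_
  convert hasSum_zero with n
  rcases eq_or_ne n 0 with rfl | hn
  · simp [hzero]
  · rw [integral_pow_smul_eq_zero_of_radial hrot hn, smul_zero]

end

theorem I_kernel (f : ℂ → ℂ) (hf : Integrable f) (hsupp : HasCompactSupport f) (w : ℂ)
    (hrot : ∀ (θ : ℝ) (z : ℂ), f (w + Complex.exp (θ * Complex.I) * z) = f (w + z))
    (hzero : (∫ z : ℂ, f z) = 0) :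
    ∀ l : ℂ, (∫ z : ℂ, Complex.exp (l * z) * f z) = 0 := by
  intro l
  have hcentered : ∫ z, exp (l * z) • f (w + z) = 0 :=
    integral_exp_mul_smul_eq_zero_of_radial (hf.comp_add_left w)
      (hsupp.comp_homeomorph (Homeomorph.addLeft w)) (fun θ z ↦ hrot θ z)
      ((integral_add_left_eq_self f w).trans hzero) l
  calc ∫ z, exp (l * z) * f z = ∫ z, exp (l * (w + z)) * f (w + z) :=
        (integral_add_left_eq_self (fun z ↦ exp (l * z) * f z) w).symm
    _ = exp (l * w) * ∫ z, exp (l * z) • f (w + z) := by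
        simp only [mul_add, exp_add, mul_assoc, smul_eq_mul, integral_const_mul]
    _ = 0 := by rw [hcentered, mul_zero]
end

section
/- Define f : ℂ → ℂ by f(a + bi) = 1 if a, b ∈ [0,1], f(a + bi) = −1 if a, b ∈ [−1, 0], and f = 0 otherwise. Then ∫_ℂ f dH² = 0, but the function λ ↦ If(λ) = ∫_ℂ e^{λz}·f(z) dH²(z) is not identically zero. -/
/-!
Away from the origin `f` is the indicator of `Q = [0,1] ×ℂ [0,1]` minus that of
`Q - (1 + i)`. By Fubini, `∫_Q e^{λz} = E(λ) E(iλ)` with `E(c) = ∫₀¹ e^{cx} dx`, and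
translating by `-(1 + i)` multiplies the integral by `e^{-(1+i)λ}`. Hence
`If(λ) = E(λ) E(iλ) (1 - e^{-(1+i)λ})`, which vanishes at `λ = 0` but not at `λ = 1`, because
`E(c) = (e^c - 1) / c` and `e^c ≠ 1` for `0 < |c| < 2π`.
-/

open MeasureTheory Complex Set
open scoped Real

theorem setIntegral_reProdIm_mul (g h : ℝ → ℂ) (s t : Set ℝ) :
    ∫ z in s ×ℂ t, g z.re * h z.im = (∫ x in s, g x) * ∫ y in t, h y := by
  rw [← setIntegral_prod_mul, ← Measure.volume_eq_prod,
    ← volume_preserving_equiv_real_prod.setIntegral_preimage_emb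
      measurableEquivRealProd.measurableEmbedding]
  rfl

theorem setIntegral_reProdIm_exp_mul (l : ℂ) (s t : Set ℝ) :
    ∫ z in s ×ℂ t, exp (l * z) = (∫ x in s, exp (l * x)) * ∫ y in t, exp (l * I * y) := by
  rw [← setIntegral_reProdIm_mul]
  congr 1 with z
  rw [← exp_add]
  congr 1
  conv_lhs => rw [← re_add_im z]
  ring

theorem setIntegral_Icc_sub_exp_mul (c : ℂ) {a b : ℝ} (hab : a ≤ b) (d : ℝ) :
    ∫ x in Icc (a - d) (b - d), exp (c * x) = exp (-c * d) * ∫ x in Icc a b, exp (c * x) := by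
  rw [integral_Icc_eq_integral_Ioc, integral_Icc_eq_integral_Ioc,
    ← intervalIntegral.integral_of_le hab, ← intervalIntegral.integral_of_le (by linarith),
    ← intervalIntegral.integral_comp_sub_right, ← intervalIntegral.integral_const_mul]
  congr 1 with x
  rw [← exp_add]
  push_cast
  ring_nf

theorem Complex.exp_ne_one_of_norm_lt_two_pi {c : ℂ} (hc : c ≠ 0) (hc' : ‖c‖ < 2 * π) :
    exp c ≠ 1 := by
  rw [Ne, exp_eq_one_iff]
  rintro ⟨n, rfl⟩
  have hn : n ≠ 0 := by rintro rfl; simp at hc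
  have : (1 : ℝ) ≤ |(n : ℝ)| := by exact_mod_cast Int.one_le_abs hn
  simp [abs_of_pos Real.pi_pos] at hc'
  nlinarith [Real.pi_pos]

theorem setIntegral_Icc_exp_mul_ne_zero {c : ℂ} (hc : ‖c‖ < 2 * π) :
    ∫ x in Icc (0 : ℝ) 1, exp (c * x) ≠ 0 := by
  rcases eq_or_ne c 0 with rfl | hc0
  · simp
  rw [integral_Icc_eq_integral_Ioc, ← intervalIntegral.integral_of_le zero_le_one,
    integral_exp_mul_complex hc0]
  simpa [sub_eq_zero, hc0] using exp_ne_one_of_norm_lt_two_pi hc0 hc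

noncomputable def twoSquares (z : ℂ) : ℂ :=
  if z.re ∈ Icc (0 : ℝ) 1 ∧ z.im ∈ Icc (0 : ℝ) 1 then 1
  else if z.re ∈ Icc (-1 : ℝ) 0 ∧ z.im ∈ Icc (-1 : ℝ) 0 then -1
  else 0

theorem twoSquares_eq_indicator_sub_indicator {z : ℂ} (hz : z ≠ 0) :
    twoSquares z =
      (Icc 0 1 ×ℂ Icc 0 1).indicator 1 z - (Icc (-1) 0 ×ℂ Icc (-1) 0).indicator 1 z := by
  classical
  have hdisj : z ∈ Icc 0 1 ×ℂ Icc 0 1 → z ∉ Icc (-1) 0 ×ℂ Icc (-1) 0 := by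
    rintro ⟨⟨h₁, -⟩, h₂, -⟩ ⟨⟨-, h₃⟩, -, h₄⟩
    exact hz (Complex.ext (le_antisymm h₃ h₁) (le_antisymm h₄ h₂))
  simp only [twoSquares, ← mem_reProdIm, indicator_apply, Pi.one_apply]
  split_ifs with h₁ h₂ h₂
  · exact absurd h₂ (hdisj h₁)
  all_goals norm_num

theorem measurableSet_Icc_reProdIm_Icc (a b c d : ℝ) : MeasurableSet (Icc a b ×ℂ Icc c d) :=
  (measurable_re measurableSet_Icc).inter (measurable_im measurableSet_Icc)

theorem integral_mul_twoSquares {F : ℂ → ℂ} (hF : Continuous F) :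
    ∫ z, F z * twoSquares z =
      (∫ z in Icc 0 1 ×ℂ Icc 0 1, F z) - ∫ z in Icc (-1) 0 ×ℂ Icc (-1) 0, F z := by
  have hint (a b : ℝ) : Integrable ((Icc a b ×ℂ Icc a b).indicator F) :=
    (integrable_indicator_iff (measurableSet_Icc_reProdIm_Icc a b a b)).2 <|
      hF.continuousOn.integrableOn_compact (isCompact_Icc.reProdIm isCompact_Icc)
  calc ∫ z, F z * twoSquares z
      = ∫ z, ((Icc 0 1 ×ℂ Icc 0 1).indicator F z -
          (Icc (-1) 0 ×ℂ Icc (-1) 0).indicator F z) := by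
        refine integral_congr_ae ?_
        filter_upwards [volume.ae_ne 0] with z hz
        simp [twoSquares_eq_indicator_sub_indicator hz, mul_sub, indicator]
    _ = _ := by
        rw [integral_sub (hint 0 1) (hint (-1) 0),
          integral_indicator (measurableSet_Icc_reProdIm_Icc _ _ _ _),
          integral_indicator (measurableSet_Icc_reProdIm_Icc _ _ _ _)]

theorem integral_exp_mul_mul_twoSquares (l : ℂ) :
    ∫ z, exp (l * z) * twoSquares z =
      (∫ x in Icc (0:ℝ) 1, exp (l * x)) * (∫ y in Icc (0:ℝ) 1, exp (l * I * y)) *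
        (1 - exp (-(1 + I) * l)) := by
  have hshift (c : ℂ) :
      ∫ x in Icc (-1:ℝ) 0, exp (c * x) = exp (-c) * ∫ x in Icc (0:ℝ) 1, exp (c * x) := by
    simpa using setIntegral_Icc_sub_exp_mul c zero_le_one 1
  rw [integral_mul_twoSquares (by fun_prop), setIntegral_reProdIm_exp_mul,
    setIntegral_reProdIm_exp_mul, hshift, hshift, show -(1 + I) * l = -l + -(l * I) by ring,
    exp_add]
  ring

theorem two_squares_counterexample
    (f : ℂ → ℂ)
    (hf : f = fun z : ℂ =>
      if z.re ∈ Set.Icc (0:ℝ) 1 ∧ z.im ∈ Set.Icc (0:ℝ) 1 then 1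
      else if z.re ∈ Set.Icc (-1:ℝ) 0 ∧ z.im ∈ Set.Icc (-1:ℝ) 0 then -1
      else 0) :
    (∫ z : ℂ, f z) = 0 ∧ ¬ (∀ l : ℂ, (∫ z : ℂ, Complex.exp (l * z) * f z) = 0) := by
  obtain rfl : f = twoSquares := hf
  refine ⟨by simpa using integral_exp_mul_mul_twoSquares 0, fun h => ?_⟩
  have hpi : 1 < π := by linarith [Real.pi_gt_three]
  have hnorm : ‖(1 : ℂ) + I‖ < 2 * π := (norm_add_le 1 I).trans_lt (by simp; linarith)
  have h₁ := h 1
  rw [integral_exp_mul_mul_twoSquares] at h₁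
  refine mul_ne_zero (mul_ne_zero ?_ ?_) ?_ h₁
  · exact setIntegral_Icc_exp_mul_ne_zero (by simp; linarith)
  · exact setIntegral_Icc_exp_mul_ne_zero (by simp; linarith)
  · refine sub_ne_zero.2 (exp_ne_one_of_norm_lt_two_pi ?_ (by rwa [mul_one, norm_neg])).symm
    simp [Complex.ext_iff]
end
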